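/- Let H be a Hopf algebra over a field k with bijective antipode S, and let λ : H → k be a nonzero left integral for H in H⁎. Assume the map H → H⁎, h ↦ λ ↼ h, is injective, and let χ : H → H be a bijective algebra homomorphism satisfying λ(x·h) = λ(χ(h)·x) for all x, h ∈ H. Set α := ε ∘ χ. Then the following are equivalent: (i) S² = id_H and α = ε; (ii) λ is cocommutative, i.e. λ(x·y) = λ(y·x) for all x, y ∈ H. -/

import Mathlib

/-!
For a left integral `λ` one has `λ(a b₂) b₁ = λ(a₂ b) S(a₁)`, obtained by applying
`z ⊗ w ↦ z λ(w b₂) b₁` to `1 ⊗ a = S(a₁) a₂ ⊗ a₃`. Applying it twice, with `λ(x h) = λ(χ(h) x)`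
in between, gives `λ(χ(x₂) h) x₁ = S²(λ((χ x)₂ h) (χ x)₁)` for every `h`. Injectivity of
`h ↦ λ ↼ h` says that the functionals `λ(· h)` separate the points of `H`, which forces
`(id ⊗ χ) Δx = (S² ⊗ id) Δ(χ x)`; applying `id ⊗ ε` yields `α(x₂) x₁ = S²(χ x)`.
If `S² = id` and `α = ε`, this reads `χ = id`, so `λ(x y) = λ(χ(y) x) = λ(y x)`.
If `λ` is cocommutative, then `λ ↼ χ(h) = λ ↼ h`, so again `χ = id`, hence `α = ε` and `S² = id`.
-/

open TensorProduct

variable {k H : Type*} [Field k] [Ring H] [HopfAlgebra k H]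

/-- `swl f h = f(h₁) • h₂` in Sweedler notation. -/
noncomputable def swl (f : H →ₗ[k] k) : H →ₗ[k] H :=
  (TensorProduct.lid k H).toLinearMap ∘ₗ (f.rTensor H) ∘ₗ Coalgebra.comul

/-- `swr f h = f(h₂) • h₁` in Sweedler notation. -/
noncomputable def swr (f : H →ₗ[k] k) : H →ₗ[k] H :=
  (TensorProduct.rid k H).toLinearMap ∘ₗ (f.lTensor H) ∘ₗ Coalgebra.comul

/-- `sw2 f g h = f(h₁) * g(h₂)`, an element of `H`, in Sweedler notation. -/
noncomputable def sw2 (f g : H →ₗ[k] H) : H →ₗ[k] H :=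
  (LinearMap.mul' k H) ∘ₗ (TensorProduct.map f g) ∘ₗ Coalgebra.comul

/-- `sw2k f g h = f(h₁) * g(h₂)`, a scalar, in Sweedler notation. -/
noncomputable def sw2k (f g : H →ₗ[k] k) : H →ₗ[k] k :=
  (LinearMap.mul' k k) ∘ₗ (TensorProduct.map f g) ∘ₗ Coalgebra.comul

/-- `comul3 h = (h₁ ⊗ h₂) ⊗ h₃`, the iterated comultiplication `(Δ ⊗ id)Δ`. -/
noncomputable def comul3 : H →ₗ[k] (H ⊗[k] H) ⊗[k] H :=
  (LinearMap.rTensor H Coalgebra.comul) ∘ₗ Coalgebra.comul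

/-- `sw3 f g e h = f(h₁) * g(h₂) * e(h₃)`, an element of `H`, in Sweedler notation. -/
noncomputable def sw3 (f g e : H →ₗ[k] H) : H →ₗ[k] H :=
  (LinearMap.mul' k H) ∘ₗ
    (TensorProduct.map ((LinearMap.mul' k H) ∘ₗ TensorProduct.map f g) e) ∘ₗ comul3

open Coalgebra HopfAlgebra

namespace TensorProduct

theorem rid_lTensor_rTensor {R M M' N : Type*} [CommSemiring R] [AddCommMonoid M] [Module R M]
    [AddCommMonoid M'] [Module R M'] [AddCommMonoid N] [Module R N]
    (f : N →ₗ[R] R) (g : M →ₗ[R] M') (t : M ⊗[R] N) :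
    TensorProduct.rid R M' (f.lTensor M' (g.rTensor N t)) =
      g (TensorProduct.rid R M (f.lTensor M t)) := by
  induction t using TensorProduct.induction_on with
  | zero => simp
  | tmul m n => simp
  | add x y hx hy => simp [hx, hy]

theorem eq_zero_of_forall_rid_lTensor_eq_zero {R M N ι : Type*} [CommSemiring R]
    [AddCommMonoid M] [Module R M] [Module.Free R M] [AddCommMonoid N] [Module R N]
    (φ : ι → N →ₗ[R] R) (hφ : ∀ n, (∀ i, φ i n = 0) → n = 0) {t : M ⊗[R] N}
    (ht : ∀ i, TensorProduct.rid R M ((φ i).lTensor M t) = 0) : t = 0 := by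
  classical
  let b := Module.Free.chooseBasis R M
  suffices equivFinsuppOfBasisLeft b t = 0 by simpa using this
  ext j
  refine hφ _ fun i => ?_
  have hcomm : φ i ∘ₗ (TensorProduct.lid R N).toLinearMap ∘ₗ (b.coord j).rTensor N =
      b.coord j ∘ₗ (TensorProduct.rid R M).toLinearMap ∘ₗ (φ i).lTensor M := by
    ext m n
    simp [mul_comm]
  rw [equivFinsuppOfBasisLeft_apply]
  simpa [ht] using LinearMap.congr_fun hcomm t

end TensorProduct

theorem HopfAlgebra.sum_antipode_mul_tmul_eq {R A : Type*} [CommSemiring R] [Semiring A]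
    [HopfAlgebra R A] {a : A} {ι : Type*} {κ : ι → Type*} (ra : Repr R a ι)
    (rv : ∀ i, Repr R (ra.right i) (κ i)) :
    ∑ i ∈ ra.index, ∑ m ∈ (rv i).index,
      (antipode R (ra.left i) * (rv i).left m) ⊗ₜ[R] (rv i).right m = 1 ⊗ₜ[R] a := by
  have hcoassoc := congr(((LinearMap.mul' R A ∘ₗ (antipode R).rTensor A).rTensor A)
    ((TensorProduct.assoc R A A A).symm $(sum_tmul_tmul_eq ra (fun i => ℛ R (ra.left i)) rv)))
  simp only [map_sum, TensorProduct.assoc_symm_tmul, LinearMap.rTensor_tmul, LinearMap.comp_apply,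
    LinearMap.mul'_apply] at hcoassoc
  rw [← hcoassoc]
  simp_rw [← TensorProduct.sum_tmul, sum_antipode_mul_eq_smul, TensorProduct.smul_tmul,
    ← TensorProduct.tmul_sum, sum_counit_smul]

theorem swr_apply (f : H →ₗ[k] k) (a : H) :
    swr f a = TensorProduct.rid k H (f.lTensor H (comul a)) :=
  rfl

theorem swr_eq_sum (f : H →ₗ[k] k) {a : H} {ι : Type*} (r : Repr k a ι) :
    swr f a = ∑ i ∈ r.index, f (r.right i) • r.left i := by
  simp [swr, ← r.eq, map_sum]

theorem swr_counit (a : H) : swr (counit (R := k)) a = a := by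
  simp [swr]

theorem swr_mul_eq_sum (f : H →ₗ[k] k) {a : H} {ι : Type*} (r : Repr k a ι) (b : H) :
    swr f (a * b) = ∑ i ∈ r.index, r.left i * swr (f ∘ₗ LinearMap.mulLeft k (r.right i)) b := by
  rw [swr_eq_sum f (r.mul (ℛ k b)), Repr.mul_index, Finset.sum_product]
  simp [swr_eq_sum _ (ℛ k b), Finset.mul_sum]

def IsLeftIntegral (lam : H →ₗ[k] k) : Prop :=
  ∀ h : H, swr lam h = lam h • (1 : H)

theorem IsLeftIntegral.swr_comp_mulLeft {lam : H →ₗ[k] k} (hlam : IsLeftIntegral lam) (a b : H) :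
    swr (lam ∘ₗ LinearMap.mulLeft k a) b = antipode k (swr (lam ∘ₗ LinearMap.mulRight k b) a) := by
  let ra := ℛ k a
  let P : H →ₗ[k] H := ∑ j ∈ (ℛ k b).index,
    (lam ∘ₗ LinearMap.mulRight k ((ℛ k b).right j)).smulRight ((ℛ k b).left j)
  have hP (w : H) : P w = swr (lam ∘ₗ LinearMap.mulLeft k w) b := by
    simp [P, swr_eq_sum _ (ℛ k b)]
  calc swr (lam ∘ₗ LinearMap.mulLeft k a) b
      = LinearMap.mul' k H (P.lTensor H (1 ⊗ₜ a)) := by simp [hP]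
    _ = ∑ i ∈ ra.index, antipode k (ra.left i) * swr lam (ra.right i * b) := by
      rw [← sum_antipode_mul_tmul_eq ra (fun i => ℛ k (ra.right i))]
      simp only [map_sum, LinearMap.lTensor_tmul, LinearMap.mul'_apply, hP, mul_assoc,
        ← Finset.mul_sum]
      exact Finset.sum_congr rfl fun i _ => by rw [swr_mul_eq_sum _ (ℛ k (ra.right i))]
    _ = antipode k (swr (lam ∘ₗ LinearMap.mulRight k b) a) := by
      simp [hlam _, swr_eq_sum _ ra, map_sum]

theorem lTensor_comul_eq_rTensor_antipode_sq_comul {lam : H →ₗ[k] k} (hlam : IsLeftIntegral lam)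
    (hinj : Function.Injective (fun h : H => lam ∘ₗ LinearMap.mulLeft k h))
    {χ : H →ₐ[k] H} (hχ : ∀ x h : H, lam (x * h) = lam (χ h * x)) (x : H) :
    χ.toLinearMap.lTensor H (comul x) =
      (antipode k ∘ₗ antipode k).rTensor H (comul (R := k) (χ x)) := by
  rw [← sub_eq_zero]
  refine TensorProduct.eq_zero_of_forall_rid_lTensor_eq_zero
    (fun h => lam ∘ₗ LinearMap.mulRight k h) (fun w hw => hinj ?_) fun h => ?_
  · ext y
    simpa using hw y
  have hcomp :
      (lam ∘ₗ LinearMap.mulRight k h) ∘ₗ χ.toLinearMap = lam ∘ₗ LinearMap.mulLeft k h :=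
    LinearMap.ext fun y => (hχ h y).symm
  have hswap : lam ∘ₗ LinearMap.mulRight k x = lam ∘ₗ LinearMap.mulLeft k (χ x) :=
    LinearMap.ext fun y => hχ y x
  rw [map_sub, map_sub, rid_lTensor_rTensor, sub_eq_zero, ← LinearMap.lTensor_comp_apply,
    ← swr_apply, ← swr_apply, LinearMap.comp_apply, hcomp, hlam.swr_comp_mulLeft, hswap,
    hlam.swr_comp_mulLeft]

theorem swr_counit_comp_eq_antipode_antipode {lam : H →ₗ[k] k} (hlam : IsLeftIntegral lam)
    (hinj : Function.Injective (fun h : H => lam ∘ₗ LinearMap.mulLeft k h))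
    {χ : H →ₐ[k] H} (hχ : ∀ x h : H, lam (x * h) = lam (χ h * x)) (x : H) :
    swr (counit ∘ₗ χ.toLinearMap) x = antipode k (antipode k (χ x)) := by
  have := congr(TensorProduct.rid k H (counit.lTensor H
    $(lTensor_comul_eq_rTensor_antipode_sq_comul hlam hinj hχ x)))
  rwa [rid_lTensor_rTensor, ← LinearMap.lTensor_comp_apply, ← swr_apply, ← swr_apply, swr_counit]
    at this

theorem statement7_general
    (lam : H →ₗ[k] k)
    (hlaml : ∀ h : H, swr lam h = lam h • (1 : H))
    (hinj : Function.Injective (fun h : H => lam ∘ₗ LinearMap.mulLeft k h))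
    (χ : H →ₐ[k] H)
    (hχ : ∀ x h : H, lam (x * h) = lam (χ h * x)) :
    ((∀ h : H, HopfAlgebra.antipode (R := k) (HopfAlgebra.antipode (R := k) h) = h) ∧
      (∀ h : H, Coalgebra.counit (R := k) (χ h) = Coalgebra.counit (R := k) h)) ↔
    (∀ x y : H, lam (x * y) = lam (y * x)) := by
  have hS2χ (hα : ∀ h, counit (R := k) (χ h) = counit h) (x : H) :
      antipode k (antipode k (χ x)) = x := by
    have hεχ : counit ∘ₗ χ.toLinearMap = counit := LinearMap.ext hα
    rw [← swr_counit_comp_eq_antipode_antipode hlaml hinj hχ, hεχ, swr_counit]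
  constructor
  · rintro ⟨hS2, hα⟩ x y
    have hχid (z : H) : χ z = z := by simpa only [hS2] using hS2χ hα z
    rw [hχ x y, hχid]
  · intro hcc
    have hχid (z : H) : χ z = z :=
      hinj <| LinearMap.ext fun w => by simp [← hχ, hcc]
    have hα (h : H) : counit (R := k) (χ h) = counit h := by rw [hχid]
    exact ⟨fun h => by simpa [hχid] using hS2χ hα h, hα⟩

/-- `H` Hopf algebra over `k` with bijective antipode `S`, `λ ≠ 0` a left
integral for `H` in `H⁎`, `h ↦ λ ↼ h` injective, and `χ` a bijective algebra endomorphism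
with `λ(x·h) = λ(χ(h)·x)`.  With `α := ε ∘ χ`, the following are equivalent:
(i) `S² = id` and `α = ε`;  (ii) `λ` is cocommutative. -/
theorem statement7
    (hS : Function.Bijective ⇑(HopfAlgebra.antipode (R := k) (A := H)))
    (lam : H →ₗ[k] k) (hlam0 : lam ≠ 0)
    (hlaml : ∀ h : H, swr lam h = lam h • (1 : H))
    (hinj : Function.Injective (fun h : H => lam ∘ₗ LinearMap.mulLeft k h))
    (χ : H →ₐ[k] H) (hχbij : Function.Bijective ⇑χ)
    (hχ : ∀ x h : H, lam (x * h) = lam (χ h * x)) :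
    ((∀ h : H, HopfAlgebra.antipode (R := k) (HopfAlgebra.antipode (R := k) h) = h) ∧
      (∀ h : H, Coalgebra.counit (R := k) (χ h) = Coalgebra.counit (R := k) h)) ↔
    (∀ x y : H, lam (x * y) = lam (y * x)) :=
  statement7_general lam hlaml hinj χ hχ
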